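/- If a finite group G has characteristic p, then G has local characteristic p; that is, every p-local subgroup of G (the normalizer of a nontrivial p-subgroup) has characteristic p. -/

import Mathlib

/-- The largest normal `p`-subgroup `O_p(G)`: the join of all normal `p`-subgroups. -/
def pCore (p : ℕ) (G : Type*) [Group G] : Subgroup G :=
  ⨆ (N : Subgroup G) (_ : N.Normal) (_ : IsPGroup p N), N

/-- A group `G` has characteristic `p` if `C_G(O_p(G)) ≤ O_p(G)`. -/
def HasCharP (p : ℕ) (G : Type*) [Group G] : Prop :=
  Subgroup.centralizer (pCore p G : Set G) ≤ pCore p G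

/-- An element is `p`-central if it has order `p` and lies in the center of some
Sylow `p`-subgroup of `G`. -/
def IsPCentral (p : ℕ) {G : Type*} [Group G] (x : G) : Prop :=
  orderOf x = p ∧ ∃ S : Sylow p G,
    x ∈ (S : Subgroup G) ⊓ Subgroup.centralizer ((S : Subgroup G) : Set G)

/-- A `p`-subgroup `P` is `p`-centric if `Z(P) = P ⊓ C_G(P)` is a Sylow `p`-subgroup of
`C_G(P)`, expressed via maximality among `p`-subgroups of `C_G(P)`. -/
def IsPCentric (p : ℕ) {G : Type*} [Group G] (P : Subgroup G) : Prop :=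
  ∀ Q : Subgroup G, Q ≤ Subgroup.centralizer (P : Set G) → IsPGroup p Q →
    P ⊓ Subgroup.centralizer (P : Set G) ≤ Q →
    Q = P ⊓ Subgroup.centralizer (P : Set G)

/-- The step `P ↦ O_p(N_G(P))`, viewed as a subgroup of `G`. -/
def pRadicalStep (p : ℕ) {G : Type*} [Group G] (P : Subgroup G) : Subgroup G :=
  (pCore p ↥(Subgroup.normalizer (P : Set G))).map (Subgroup.normalizer (P : Set G)).subtype

/-- The chain `P₀ = Q`, `P_{i+1} = O_p(N_G(P_i))`. -/
def radChain (p : ℕ) {G : Type*} [Group G] (Q : Subgroup G) : ℕ → Subgroup G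
  | 0 => Q
  | n + 1 => pRadicalStep p (radChain p Q n)

/-- `G` has local characteristic `p`: every `p`-local subgroup has characteristic `p`. -/
def LocalCharP (p : ℕ) (G : Type*) [Group G] : Prop :=
  ∀ P : Subgroup G, P ≠ ⊥ → IsPGroup p P → HasCharP p ↥(Subgroup.normalizer (P : Set G))

/-- `G` has parabolic characteristic `p`: every `p`-local subgroup containing a Sylow
`p`-subgroup of `G` has characteristic `p`. -/
def ParabolicCharP (p : ℕ) (G : Type*) [Group G] : Prop :=
  ∀ P : Subgroup G, P ≠ ⊥ → IsPGroup p P →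
    (∃ S : Sylow p G, (S : Subgroup G) ≤ (Subgroup.normalizer (P : Set G))) → HasCharP p ↥(Subgroup.normalizer (P : Set G))

/-!
Let `N = N_G(P)` and `V = O_p(G)`. As `C_N(O_p(N))` is normal in `N`, it suffices that it is a
`p`-group, i.e. that it contains no nontrivial `p'`-element `x`. The `p`-group `Q = PV` is
normalized by `N`, so `Q ∩ N ≤ O_p(N)` and `x` centralizes both `P` and `C_Q(P)`. This forces
`x` to centralize `Q`: otherwise the normalizer condition in `Q` gives `u ∈ N_Q(C_Q(x)) \ C_Q(x)`,
and `[u, x]` lies in `C_Q(C_Q(x)) ≤ C_Q(P)`, so it commutes with `x`; then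
`[u, x]^|x| = [u, x^|x|] = 1`, and since `[u, x]` is a `p`-element, `[u, x] = 1`.
Hence `x ∈ C_G(V) ≤ V`, so `x = 1`.
-/

open Subgroup
open scoped commutatorElement

section PCore

variable {p : ℕ} {G : Type*} [Group G]

theorem le_pCore {N : Subgroup G} (hN : N.Normal) (hNp : IsPGroup p N) : N ≤ pCore p G :=
  le_iSup₂_of_le N hN (le_iSup_of_le hNp le_rfl)

instance pCore_normal : (pCore p G).Normal :=
  @iSup_normal _ _ _ _ fun _ => @iSup_normal _ _ _ _ fun hN => @iSup_normal _ _ _ _ fun _ => hN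

theorem isPGroup_pCore [Fact p.Prime] [Finite G] : IsPGroup p (pCore p G) := by
  let S : Sylow p G := Classical.arbitrary _
  refine S.isPGroup'.to_le (iSup₂_le fun N hN => iSup_le fun hNp => ?_)
  have := hN
  exact hNp.le_sylow_of_normal S

end PCore

section CoprimeAction

variable {G : Type*} [Group G]

theorem Commute.of_commute_commutatorElement {v x : G} (hc : Commute ⁅v, x⁆ x)
    (hco : (orderOf x).Coprime (orderOf ⁅v, x⁆)) : Commute v x := by
  have hconj : v * x * v⁻¹ = ⁅v, x⁆ * x := by rw [commutatorElement_def]; group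
  have hpow : ⁅v, x⁆ ^ orderOf x = 1 := by
    have := conj_pow (a := v) (b := x) (i := orderOf x)
    rwa [hconj, hc.mul_pow, pow_orderOf_eq_one, mul_one, mul_one, mul_inv_cancel] at this
  have : orderOf ⁅v, x⁆ = 1 := hco.symm.eq_one_of_dvd (orderOf_dvd_of_pow_eq_one hpow)
  exact commutatorElement_eq_one_iff_commute.mp (orderOf_eq_one_iff.mp this)

variable {p : ℕ}

theorem IsPGroup.eq_one_of_coprime_orderOf (hG : IsPGroup p G) {g : G}
    (hg : (orderOf g).Coprime p) : g = 1 := by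
  obtain ⟨k, hk⟩ := hG g
  exact orderOf_eq_one_iff.mp ((hg.pow_right k).eq_one_of_dvd (orderOf_dvd_of_pow_eq_one hk))

theorem IsPGroup.of_forall_coprime_orderOf [Fact p.Prime] [Finite G]
    (h : ∀ g : G, (orderOf g).Coprime p → g = 1) : IsPGroup p G := by
  refine IsPGroup.of_card <|
    Nat.eq_prime_pow_of_unique_prime_dvd Nat.card_pos.ne' fun {q} hq hqG => ?_
  have : Fact q.Prime := ⟨hq⟩
  obtain ⟨g, hg⟩ := exists_prime_orderOf_dvd_card' q hqG
  by_contra hqp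
  have := h g (hg ▸ (Nat.coprime_primes hq Fact.out).mpr hqp)
  rw [this, orderOf_one] at hg
  exact hq.one_lt.ne hg

variable [Fact p.Prime]

theorem IsPGroup.lt_inf_normalizer {Q T : Subgroup G} [Finite Q] (hQ : IsPGroup p Q)
    (hTQ : T < Q) : T < Q ⊓ normalizer (T : Set G) := by
  have := hQ.isNilpotent
  have hT : T.subgroupOf Q < ⊤ :=
    lt_top_iff_ne_top.mpr fun h => hTQ.not_ge (subgroupOf_eq_top.mp h)
  have hlt := Group.normalizerCondition_of_isNilpotent _ hT
  rw [← subgroupOf_normalizer_eq hTQ.le, ← map_subtype_lt_map_subtype, subgroupOf_map_subtype,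
    subgroupOf_map_subtype, inf_of_le_left hTQ.le] at hlt
  rwa [inf_comm]

theorem IsPGroup.le_centralizer_of_coprime {Q P : Subgroup G} [Finite Q] (hQ : IsPGroup p Q)
    {x : G} (hxQ : x ∈ normalizer (Q : Set G)) (hx : (orderOf x).Coprime p)
    (hPQ : P ≤ Q) (hxP : P ≤ centralizer {x})
    (hxCP : Q ⊓ centralizer (P : Set G) ≤ centralizer {x}) :
    Q ≤ centralizer {x} := by
  by_contra hQx
  set T := Q ⊓ centralizer {x}
  have hTQ : T < Q := inf_le_left.lt_of_ne fun h => hQx (h ▸ inf_le_right)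
  obtain ⟨u, ⟨huQ, huT⟩, hu⟩ := SetLike.exists_of_lt (hQ.lt_inf_normalizer hTQ)
  have hxT : x ∈ centralizer (T : Set G) := fun t ht => mem_centralizer_singleton_iff.mp ht.2
  have hcQ : ⁅u, x⁆ ∈ Q := by
    rw [commutatorElement_def, mul_assoc, mul_assoc, ← mul_assoc x]
    exact mul_mem huQ ((mem_normalizer_iff.mp hxQ _).mp (inv_mem huQ))
  -- `u` normalizes `T`, hence also `C_G(T)`, which contains `x`
  have hcT : ⁅u, x⁆ ∈ centralizer (T : Set G) := by
    have := (normal_subgroupOf_iff (centralizer_le_normalizer _)).mp inferInstance x u hxT huT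
    rw [commutatorElement_def]
    exact mul_mem this (inv_mem hxT)
  have hPT : (P : Set G) ⊆ T := fun b hb => mem_inf.mpr ⟨hPQ hb, hxP hb⟩
  have hcx : Commute ⁅u, x⁆ x :=
    mem_centralizer_singleton_iff.mp (hxCP (mem_inf.mpr ⟨hcQ, centralizer_le hPT hcT⟩))
  have hco : (orderOf x).Coprime (orderOf ⁅u, x⁆) := by
    have := hQ.orderOf_coprime hx.symm ⟨_, hcQ⟩
    rw [orderOf_mk] at this
    exact this.symm
  exact hu ⟨huQ, mem_centralizer_singleton_iff.mpr (hcx.of_commute_commutatorElement hco).eq⟩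

end CoprimeAction

theorem eq_one_of_mem_centralizer_pCore_normalizer {p : ℕ} [Fact p.Prime] {G : Type*} [Group G]
    [Finite G] (hG : HasCharP p G) {P : Subgroup G} (hP : IsPGroup p P)
    {y : normalizer (P : Set G)} (hy : y ∈ centralizer (pCore p (normalizer (P : Set G)) : Set _))
    (hco : (orderOf y).Coprime p) : y = 1 := by
  set Q := P ⊔ pCore p G
  have hQ : IsPGroup p Q := hP.to_sup_of_normal_right isPGroup_pCore
  have hNQ : normalizer (P : Set G) ≤ normalizer (Q : Set G) :=
    normalizer_le_normalizer_sup_normal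
  have hQN : Q ⊓ normalizer (P : Set G) ≤ centralizer {(y : G)} := by
    intro q hq
    have hqR : (⟨q, hq.2⟩ : normalizer (P : Set G)) ∈ pCore p (normalizer (P : Set G)) :=
      le_pCore (normal_subgroupOf_of_le_normalizer hNQ) hQ.comap_subtype (mem_subgroupOf.mpr hq.1)
    exact mem_centralizer_singleton_iff.mpr (congrArg Subtype.val (hy _ hqR))
  have hyQ : Q ≤ centralizer {(y : G)} :=
    hQ.le_centralizer_of_coprime (hNQ y.2) (by rwa [orderOf_coe]) le_sup_left
      ((le_inf le_sup_left le_normalizer).trans hQN)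
      ((inf_le_inf_left Q (centralizer_le_normalizer _)).trans hQN)
  have hyV : (y : G) ∈ pCore p G :=
    hG fun v hv => mem_centralizer_singleton_iff.mp (hyQ (mem_sup_right hv))
  have := isPGroup_pCore.eq_one_of_coprime_orderOf (g := ⟨(y : G), hyV⟩)
    (by rwa [orderOf_mk, orderOf_coe])
  exact Subtype.ext (congrArg Subtype.val this : (y : G) = 1)

/-- If `G` has characteristic `p` then `G` has local characteristic `p`. -/
theorem stmt2 (p : ℕ) [Fact p.Prime] (G : Type*) [Group G] [Finite G]
    (hG : HasCharP p G) :
    ∀ P : Subgroup G, P ≠ ⊥ → IsPGroup p P → HasCharP p ↥(Subgroup.normalizer (P : Set G)) := by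
  intro P _ hP
  have hC : IsPGroup p (centralizer (pCore p (normalizer (P : Set G)) : Set _)) :=
    IsPGroup.of_forall_coprime_orderOf fun y hy =>
      Subtype.ext (eq_one_of_mem_centralizer_pCore_normalizer hG hP y.2 (by rwa [orderOf_coe]))
  exact le_pCore inferInstance hC
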